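/- For every integer r with 1 ≤ r ≤ 8 and all f, g ∈ F_r = {c ∈ L_r : ⟨k_r,c⟩ = −2 and ⟨c,c⟩ = 0}, one has (9 − r)·⟨f,g⟩ ≤ 8. In particular ⟨f,g⟩ ≤ 8 for all f, g ∈ F_8, which is the lattice-theoretic reason that an edge label in the simple family graph of a real weak del Pezzo surface is at most 8. -/

import Mathlib

/-- The intersection form on the Neron-Severi lattice `L_r = ℤ^(r+1)` of a weak del Pezzo
surface of degree `9 - r` in a type 1 basis: `⟨v,w⟩ = v₀w₀ - v₁w₁ - ⋯ - vᵣwᵣ`. -/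
def nsForm (r : ℕ) (v w : Fin (r + 1) → ℤ) : ℤ :=
  v 0 * w 0 - ∑ i : Fin r, v i.succ * w i.succ

/-- The canonical class `k_r = -3e₀ + e₁ + ⋯ + e_r`. -/
def canK (r : ℕ) : Fin (r + 1) → ℤ := fun i => if i = 0 then -3 else 1

/-- The standard basis vector `e_j` of `L_r`. -/
def eVec (r : ℕ) (j : Fin (r + 1)) : Fin (r + 1) → ℤ := fun i => if i = j then 1 else 0

/-- The set of (-2)-classes `R_r = {c : ⟨k_r,c⟩ = 0, ⟨c,c⟩ = -2}`. -/
def Rset (r : ℕ) : Set (Fin (r + 1) → ℤ) :=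
  {c | nsForm r (canK r) c = 0 ∧ nsForm r c c = -2}

/-- The set of (-1)-classes `E_r = {c : ⟨k_r,c⟩ = -1, ⟨c,c⟩ = -1}`. -/
def Eset (r : ℕ) : Set (Fin (r + 1) → ℤ) :=
  {c | nsForm r (canK r) c = -1 ∧ nsForm r c c = -1}

/-- The set of minimal-family classes `F_r = {c : ⟨k_r,c⟩ = -2, ⟨c,c⟩ = 0}`. -/
def Fset (r : ℕ) : Set (Fin (r + 1) → ℤ) :=
  {c | nsForm r (canK r) c = -2 ∧ nsForm r c c = 0}

/-! For `r ≤ 9` the form satisfies the Hodge index inequality `⟨k,k⟩⟨h,h⟩ ≤ ⟨k,h⟩²`, which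
reduces to Cauchy–Schwarz on the coordinates `e₁, …, e_r`. For `f, g ∈ F_r` the class
`h = f + g` has `⟨k,h⟩ = -4` and `⟨h,h⟩ = 2⟨f,g⟩`, so the inequality reads
`2(9 - r)⟨f,g⟩ ≤ 16`. -/

lemma nsForm_comm (r : ℕ) (v w : Fin (r + 1) → ℤ) : nsForm r v w = nsForm r w v := by
  simp only [nsForm, mul_comm]

lemma nsForm_add_right (r : ℕ) (u v w : Fin (r + 1) → ℤ) :
    nsForm r u (v + w) = nsForm r u v + nsForm r u w := by
  simp only [nsForm, Pi.add_apply, mul_add, Finset.sum_add_distrib]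
  ring

lemma nsForm_add_left (r : ℕ) (u v w : Fin (r + 1) → ℤ) :
    nsForm r (u + v) w = nsForm r u w + nsForm r v w := by
  rw [nsForm_comm, nsForm_add_right, nsForm_comm r w, nsForm_comm r w]

lemma nsForm_canK_self (r : ℕ) : nsForm r (canK r) (canK r) = 9 - r := by
  simp [nsForm, canK, Fin.succ_ne_zero]

lemma nsForm_canK_left (r : ℕ) (h : Fin (r + 1) → ℤ) :
    nsForm r (canK r) h = -3 * h 0 - ∑ i : Fin r, h i.succ := by
  simp [nsForm, canK, Fin.succ_ne_zero]

lemma nsForm_canK_self_mul_nsForm_self_le_sq {r : ℕ} (hr : r ≤ 9) (h : Fin (r + 1) → ℤ) :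
    nsForm r (canK r) (canK r) * nsForm r h h ≤ nsForm r (canK r) h ^ 2 := by
  rw [nsForm_canK_self, nsForm_canK_left]
  rcases Nat.eq_zero_or_pos r with rfl | hr0
  · simp only [nsForm, Finset.univ_eq_empty, Finset.sum_empty]
    exact (by ring : _ = _).le
  set a := h 0
  set B := ∑ i : Fin r, h i.succ
  set S := ∑ i : Fin r, h i.succ ^ 2
  have hform : nsForm r h h = a ^ 2 - S := by simp only [nsForm, ← sq]; rfl
  have cauchy_schwarz : B ^ 2 ≤ r * S := by
    simpa using sq_sum_le_card_mul_sum_sq (s := Finset.univ) (f := fun i : Fin r => h i.succ)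
  have hr9 : (0 : ℤ) ≤ 9 - r := by omega
  -- `r · (⟨k,h⟩² - (9 - r)⟨h,h⟩) = (r a + 3 B)² + (9 - r)(r S - B²)`
  have key : 0 ≤ (r : ℤ) * ((-3 * a - B) ^ 2 - (9 - r) * (a ^ 2 - S)) := by
    nlinarith [sq_nonneg ((r : ℤ) * a + 3 * B), mul_nonneg hr9 (sub_nonneg.2 cauchy_schwarz)]
  rw [hform, ← sub_nonneg]
  exact nonneg_of_mul_nonneg_right key (by exact_mod_cast hr0)

theorem Fset.nine_sub_mul_nsForm_le {r : ℕ} (hr : r ≤ 9) {f g : Fin (r + 1) → ℤ}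
    (hf : f ∈ Fset r) (hg : g ∈ Fset r) : (9 - r : ℤ) * nsForm r f g ≤ 8 := by
  have hk : nsForm r (canK r) (f + g) = -4 := by
    rw [nsForm_add_right, hf.1, hg.1]; norm_num
  have hfg : nsForm r (f + g) (f + g) = 2 * nsForm r f g := by
    rw [nsForm_add_left, nsForm_add_right, nsForm_add_right, hf.2, hg.2, nsForm_comm r g f]; ring
  have hodge := nsForm_canK_self_mul_nsForm_self_le_sq hr (f + g)
  rw [nsForm_canK_self, hk, hfg] at hodge
  linarith

/-- For 1 ≤ r ≤ 8 and f, g ∈ F_r one has (9-r)·⟨f,g⟩ ≤ 8; in particular ⟨f,g⟩ ≤ 8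
for f, g ∈ F_8, so edge labels in simple family graphs of real weak del Pezzo surfaces
are at most 8. -/
theorem stmt_14 :
    (∀ r : ℕ, 1 ≤ r → r ≤ 8 → ∀ f ∈ Fset r, ∀ g ∈ Fset r,
      ((9 : ℤ) - (r : ℤ)) * nsForm r f g ≤ 8) ∧
    (∀ f ∈ Fset 8, ∀ g ∈ Fset 8, nsForm 8 f g ≤ 8) := by
  refine ⟨fun r _ hr f hf g hg => Fset.nine_sub_mul_nsForm_le (by omega) hf hg,
    fun f hf g hg => ?_⟩
  simpa using Fset.nine_sub_mul_nsForm_le (by norm_num) hf hg
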